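/- arXiv:2409.10192 — 6 statements merged into one kernel-verified Lean document; each statement's English description precedes it below -/
import Mathlib

section
/- Correctness of the generalized partially blind signature scheme: for all integers sk, ρ, w, every hidden-message vector S ∈ ℤⁿ and every public-message vector M ∈ ℤᵐ, if α = (∏_{i=1}^n Vᵢ^{Sᵢ})·g^ρ (blinding), σ₁ = g^{sk}·(α·h·∏_{i=1}^m Uᵢ^{Mᵢ})^w, σ₂ = g^w, σ₃ = g₂^w (signing), and s₁ = σ₁·σ₂^{−ρ} (unblinding), then the unblinded signature (s₁, σ₃) verifies, i.e., e(g, g₂)^{sk} · e((∏_{i=1}^n Vᵢ^{Sᵢ})·(∏_{i=1}^m Uᵢ^{Mᵢ})·h, σ₃) = e(s₁, g₂). -/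
/-- Correctness of the generalized partially blind signature scheme. -/
theorem pbs_correctness
    {G G₂ GT : Type*} [CommGroup G] [CommGroup G₂] [CommGroup GT]
    (e : G → G₂ → GT)
    (e_left : ∀ x y z, e (x * y) z = e x z * e y z)
    (e_right : ∀ x z w, e x (z * w) = e x z * e x w)
    (g h : G) (g₂ : G₂)
    {n m : ℕ} (V : Fin n → G) (U : Fin m → G)
    (sk ρ w : ℤ) (S : Fin n → ℤ) (M : Fin m → ℤ)
    (α σ₁ σ₂ s₁ : G) (σ₃ : G₂)
    (hα : α = (∏ i, V i ^ S i) * g ^ ρ)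
    (hσ₁ : σ₁ = g ^ sk * (α * h * ∏ i, U i ^ M i) ^ w)
    (hσ₂ : σ₂ = g ^ w)
    (hσ₃ : σ₃ = g₂ ^ w)
    (hs₁ : s₁ = σ₁ * σ₂ ^ (-ρ)) :
    e g g₂ ^ sk * e ((∏ i, V i ^ S i) * (∏ i, U i ^ M i) * h) σ₃ = e s₁ g₂ := by
  have hL : ∀ (x : G) (z : G₂) (a : ℤ), e (x ^ a) z = e x z ^ a := by
    intro x z a
    exact map_zpow (MonoidHom.mk' (fun x => e x z) (fun a b => e_left a b z)) x a
  have hR : ∀ (x : G) (z : G₂) (a : ℤ), e x (z ^ a) = e x z ^ a := by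
    intro x z a
    exact map_zpow (MonoidHom.mk' (fun y => e x y) (fun a b => e_right x a b)) z a
  have hs : s₁ = g ^ sk * ((∏ i, V i ^ S i) * (∏ i, U i ^ M i) * h) ^ w := by
    subst hα hσ₁ hσ₂ hs₁
    simp only [mul_zpow, ← zpow_mul]
    simp [zpow_neg, mul_comm, mul_assoc, mul_left_comm]
    rw [mul_left_comm, mul_inv_cancel_left]
  rw [hs, hσ₃]
  simp only [e_left, hL, hR, mul_zpow]
end

section
/- Special soundness of the Σ-protocol for correct blinding: if (γ, c, Y, z) and (γ, c', Y', z') are two accepting transcripts for the same blinded value α ∈ G and the same commitment γ ∈ G with c ≢ c' (mod q), then there exist a vector S' ∈ ℤⁿ and an integer ρ' such that α = (∏ᵢ Vᵢ^{S'ᵢ})·g^{ρ'}, and moreover (c − c')·S'ᵢ ≡ Yᵢ − Y'ᵢ (mod q) for every i and (c − c')·ρ' ≡ z − z' (mod q); i.e., a witness for the blinding can be extracted from two accepting transcripts with distinct challenges. -/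
/-- Special soundness of the Σ-protocol for correct blinding. -/
theorem blinding_sigma_special_soundness
    {q : ℕ} (hq : q.Prime)
    {G : Type*} [CommGroup G] (hG : ∀ y : G, y ^ q = 1)
    (g : G) {n : ℕ} (V : Fin n → G)
    (α γ : G) (c c' z z' : ℤ) (Y Y' : Fin n → ℤ)
    (hacc : (∏ i, V i ^ Y i) * g ^ z = α ^ c * γ)
    (hacc' : (∏ i, V i ^ Y' i) * g ^ z' = α ^ c' * γ)
    (hc : ¬ (c ≡ c' [ZMOD (q : ℤ)])) :
    ∃ (S' : Fin n → ℤ) (ρ' : ℤ),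
      α = (∏ i, V i ^ S' i) * g ^ ρ' ∧
      (∀ i, (c - c') * S' i ≡ Y i - Y' i [ZMOD (q : ℤ)]) ∧
      (c - c') * ρ' ≡ z - z' [ZMOD (q : ℤ)] := by
  have hdvd : ¬ (q : ℤ) ∣ (c - c') := by
    intro h
    exact hc ((Int.modEq_iff_dvd.mpr h).symm)
  have hp : Prime (q : ℤ) := Nat.prime_iff_prime_int.mp hq
  obtain ⟨u, v, huv⟩ : IsCoprime (q : ℤ) (c - c') :=
    (hp.coprime_iff_not_dvd).mpr hdvd
  -- huv : u * q + v * (c - c') = 1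
  have hαq : α ^ (q : ℤ) = 1 := by rw [zpow_natCast, hG]
  have key : α ^ (c - c') = (∏ i, V i ^ (Y i - Y' i)) * g ^ (z - z') := by
    have h : (α ^ c * γ) / (α ^ c' * γ)
        = ((∏ i, V i ^ Y i) * g ^ z) / ((∏ i, V i ^ Y' i) * g ^ z') := by
      rw [hacc, hacc']
    calc α ^ (c - c') = (α ^ c * γ) / (α ^ c' * γ) := by
          rw [zpow_sub, mul_div_mul_right_eq_div, div_eq_mul_inv]
      _ = ((∏ i, V i ^ Y i) * g ^ z) / ((∏ i, V i ^ Y' i) * g ^ z') := h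
      _ = (∏ i, V i ^ (Y i - Y' i)) * g ^ (z - z') := by
          rw [Finset.prod_congr rfl fun i _ => zpow_sub (V i) (Y i) (Y' i),
            zpow_sub, Finset.prod_mul_distrib, Finset.prod_inv_distrib,
            mul_div_mul_comm, div_eq_mul_inv, div_eq_mul_inv]
  refine ⟨fun i => v * (Y i - Y' i), v * (z - z'), ?_, ?_, ?_⟩
  · calc α = α ^ (1 : ℤ) := (zpow_one α).symm
      _ = α ^ ((q : ℤ) * u + (c - c') * v) := by rw [← huv]; ring_nf
      _ = (α ^ (q : ℤ)) ^ u * (α ^ (c - c')) ^ v := by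
          rw [zpow_add, zpow_mul, zpow_mul]
      _ = ((∏ i, V i ^ (Y i - Y' i)) * g ^ (z - z')) ^ v := by
          rw [hαq, key]; group
      _ = (∏ i, V i ^ (v * (Y i - Y' i))) * g ^ (v * (z - z')) := by
          rw [mul_zpow, ← Finset.prod_zpow]
          congr 1
          · exact Finset.prod_congr rfl fun i _ => by
              rw [← zpow_mul, mul_comm]
          · rw [← zpow_mul, mul_comm]
  · intro i
    exact Int.modEq_iff_dvd.mpr ⟨u * (Y i - Y' i), by linear_combination (-(Y i - Y' i)) * huv⟩
  · exact Int.modEq_iff_dvd.mpr ⟨u * (z - z'), by linear_combination (-(z - z')) * huv⟩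
end

section
/- Special soundness of the Σ-protocol for correct VRF evaluation: if (E, c, z) and (E, c', z') are two accepting transcripts with the same commitment E ∈ G_T and c ≢ c' (mod q), then there exists an integer s with (c − c')·s ≡ z − z' (mod q) and T^{s + x} = g_T; i.e., a secret key s for which T is the Dodis–Yampolskiy VRF tag g_T^{1/(s+x)} under label identifier x can be extracted from two accepting transcripts with distinct challenges. -/
lemma zpow_congr_of_pow_eq_one {q : ℕ} {GT : Type*} [CommGroup GT]
    (y : GT) (hy : y ^ q = 1) {a b : ℤ} (h : a ≡ b [ZMOD (q : ℤ)]) :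
    y ^ a = y ^ b := by
  obtain ⟨k, hk⟩ := Int.ModEq.dvd h
  have hb : b = a + (q : ℤ) * k := by linarith
  rw [hb, zpow_add, zpow_mul, zpow_natCast, hy, one_zpow, mul_one]

/-- Special soundness of the Σ-protocol for correct VRF evaluation. -/
theorem vrf_sigma_special_soundness
    {q : ℕ} (hq : q.Prime)
    {GT : Type*} [CommGroup GT] (hGT : ∀ y : GT, y ^ q = 1)
    (gT T : GT) (x : ℤ)
    (E : GT) (c c' z z' : ℤ)
    (hacc : E * gT ^ c * T ^ (-(c * x)) = T ^ z)
    (hacc' : E * gT ^ c' * T ^ (-(c' * x)) = T ^ z')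
    (hc : ¬ (c ≡ c' [ZMOD (q : ℤ)])) :
    ∃ s : ℤ, (c - c') * s ≡ z - z' [ZMOD (q : ℤ)] ∧ T ^ (s + x) = gT := by
  haveI : Fact q.Prime := ⟨hq⟩
  set d : ℤ := c - c' with hd
  -- d is invertible mod q
  have hdz : ((d : ZMod q)) ≠ 0 := by
    rw [Ne, ZMod.intCast_zmod_eq_zero_iff_dvd]
    intro hdvd
    exact hc ((Int.modEq_iff_dvd.mpr (by simpa [hd] using hdvd)).symm)
  set e : ℤ := ((((d : ZMod q)⁻¹ : ZMod q)).val : ℤ) with he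
  have hde : d * e ≡ 1 [ZMOD (q : ℤ)] := by
    have : ((d * e : ℤ) : ZMod q) = ((1 : ℤ) : ZMod q) := by
      push_cast [he]
      rw [ZMod.natCast_val, ZMod.cast_id]
      field_simp
    exact (ZMod.intCast_eq_intCast_iff' _ _ _).mp this
  -- divide the two accepting equations
  have hdiv : gT ^ d = T ^ ((z - z') + d * x) := by
    have h1 : (E * (gT ^ c * T ^ (-(c * x)))) / (E * (gT ^ c' * T ^ (-(c' * x))))
        = T ^ z / T ^ z' := by
      rw [← mul_assoc, ← mul_assoc, hacc, hacc']
    rw [mul_div_mul_left_eq_div, mul_div_mul_comm] at h1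
    have h2 : gT ^ c / gT ^ c' = (T ^ z / T ^ z') / (T ^ (-(c*x)) / T ^ (-(c'*x))) :=
      eq_div_iff_mul_eq'.mpr h1
    rw [hd, zpow_sub, ← div_eq_mul_inv, h2]
    simp only [div_eq_mul_inv, ← zpow_neg, ← zpow_add]
    congr 1
    ring
  refine ⟨e * (z - z'), ?_, ?_⟩
  · calc d * (e * (z - z')) = (d * e) * (z - z') := by ring
      _ ≡ 1 * (z - z') [ZMOD (q : ℤ)] := hde.mul_right _
      _ = z - z' := one_mul _
  · have h3 : gT ^ (d * e) = T ^ ((e * (z - z') + d * e * x)) := by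
      rw [zpow_mul, hdiv, ← zpow_mul]
      congr 1
      ring
    have hgl : gT ^ (d * e) = gT ^ (1 : ℤ) := zpow_congr_of_pow_eq_one gT (hGT gT) hde
    have hTr : T ^ (e * (z - z') + d * e * x) = T ^ (e * (z - z') + x) := by
      apply zpow_congr_of_pow_eq_one T (hGT T)
      exact Int.ModEq.add_left _ (by simpa using hde.mul_right x)
    rw [hgl, hTr, zpow_one] at h3
    exact h3.symm
end

section
/- Completeness of the payout coin verification argument: if (r, s) is a valid coin for the message vector 𝔐 ∈ ℤ^k, i.e., pk · e((∏ᵢ 𝔊ᵢ^{𝔐ᵢ})·h, s) = e(r, g₂), then for every B ∈ ℤ^k, every integer c, and every J ∈ G, setting E = e(J, g₂)·e(∏ᵢ 𝔊ᵢ^{Bᵢ}, s)⁻¹, Yᵢ = Bᵢ + c·𝔐ᵢ and z = r^c·J, the verification equation E · pk^c · e(h, s)^c = e(z, g₂) · e(∏ᵢ 𝔊ᵢ^{Yᵢ}, s)⁻¹ holds. -/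
/-!
Both sides are products of pairings. Bilinearity in the first argument expands `e (r ^ c * J) g₂`
and `e (∏ 𝔊ᵢ ^ (Bᵢ + c 𝔐ᵢ)) s`; substituting the coin equation for `e r g₂` makes the factors
`e (∏ 𝔊ᵢ ^ 𝔐ᵢ) s ^ c` cancel, and what is left is the left-hand side.
-/

theorem map_zpow_of_map_mul {G H : Type*} [Group G] [Group H] (f : G → H)
    (hf : ∀ x y, f (x * y) = f x * f y) (x : G) (n : ℤ) : f (x ^ n) = f x ^ n :=
  map_zpow (MonoidHom.mk' f hf) x n

theorem Finset.prod_zpow_add_mul {ι G : Type*} [CommGroup G] (s : Finset ι) (g : ι → G)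
    (a b : ι → ℤ) (c : ℤ) :
    ∏ i ∈ s, g i ^ (a i + c * b i) = (∏ i ∈ s, g i ^ a i) * (∏ i ∈ s, g i ^ b i) ^ c := by
  simp only [zpow_add, mul_comm c, zpow_mul, Finset.prod_mul_distrib, Finset.prod_zpow]

theorem payout_coin_completeness_general
    {G G₂ GT : Type*} [CommGroup G] [CommGroup G₂] [CommGroup GT]
    (e : G → G₂ → GT)
    (e_left : ∀ x y z, e (x * y) z = e x z * e y z)
    (h : G) (g₂ : G₂) {k : ℕ} (𝔊 : Fin k → G) (pk : GT)
    (𝔐 : Fin k → ℤ) (r : G) (s : G₂)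
    (hcoin : pk * e ((∏ i, 𝔊 i ^ 𝔐 i) * h) s = e r g₂)
    (B : Fin k → ℤ) (c : ℤ) (J : G)
    (E : GT) (Y : Fin k → ℤ) (z : G)
    (hE : E = e J g₂ * (e (∏ i, 𝔊 i ^ B i) s)⁻¹)
    (hY : ∀ i, Y i = B i + c * 𝔐 i)
    (hz : z = r ^ c * J) :
    E * pk ^ c * (e h s) ^ c = e z g₂ * (e (∏ i, 𝔊 i ^ Y i) s)⁻¹ := by
  have e_zpow (x : G) (w : G₂) (n : ℤ) : e (x ^ n) w = e x w ^ n :=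
    map_zpow_of_map_mul (e · w) (e_left · · w) x n
  have hprod : ∏ i, 𝔊 i ^ Y i = (∏ i, 𝔊 i ^ B i) * (∏ i, 𝔊 i ^ 𝔐 i) ^ c := by
    simp only [hY, Finset.prod_zpow_add_mul]
  have hr : e r g₂ = pk * e (∏ i, 𝔊 i ^ 𝔐 i) s * e h s := by
    rw [← hcoin, e_left, mul_assoc]
  rw [hE, hz, hprod, e_left, e_left, e_zpow, e_zpow, hr, mul_zpow, mul_zpow, mul_inv]
  grind [mul_inv_cancel]

/-- Completeness of the payout coin verification argument. -/
theorem payout_coin_completeness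
    {G G₂ GT : Type*} [CommGroup G] [CommGroup G₂] [CommGroup GT]
    (e : G → G₂ → GT)
    (e_left : ∀ x y z, e (x * y) z = e x z * e y z)
    (e_right : ∀ x z w, e x (z * w) = e x z * e x w)
    (h : G) (g₂ : G₂) {k : ℕ} (𝔊 : Fin k → G) (pk : GT)
    (𝔐 : Fin k → ℤ) (r : G) (s : G₂)
    (hcoin : pk * e ((∏ i, 𝔊 i ^ 𝔐 i) * h) s = e r g₂)
    (B : Fin k → ℤ) (c : ℤ) (J : G)
    (E : GT) (Y : Fin k → ℤ) (z : G)
    (hE : E = e J g₂ * (e (∏ i, 𝔊 i ^ B i) s)⁻¹)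
    (hY : ∀ i, Y i = B i + c * 𝔐 i)
    (hz : z = r ^ c * J) :
    E * pk ^ c * (e h s) ^ c = e z g₂ * (e (∏ i, 𝔊 i ^ Y i) s)⁻¹ :=
  payout_coin_completeness_general e e_left h g₂ 𝔊 pk 𝔐 r s hcoin B c J E Y z hE hY hz
end

section
/- Transcript-quotient identity for the payout coin argument: if (E, c, Y, z) and (E, c', Y', z') are two accepting transcripts with the same commitment E ∈ G_T and the same second component s ∈ G₂, then pk^{c−c'} · e(h, s)^{c−c'} · e(∏ᵢ 𝔊ᵢ^{Yᵢ−Y'ᵢ}, s) = e(z·z'⁻¹, g₂). (This is the key algebraic step in extracting a committed coin from two accepting transcripts with distinct challenges.) -/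
/-! Dividing the two verification equations cancels the commitment `E`, and linearity of `e` in its
first argument turns the quotients of pairing values into pairings of quotients. -/

theorem Finset.prod_zpow_sub {ι α : Type*} [CommGroup α] (s : Finset ι) (g : ι → α)
    (a b : ι → ℤ) : ∏ i ∈ s, g i ^ (a i - b i) = (∏ i ∈ s, g i ^ a i) / ∏ i ∈ s, g i ^ b i := by
  rw [← Finset.prod_div_distrib]
  exact Finset.prod_congr rfl fun i _ => by rw [zpow_sub, div_eq_mul_inv]

theorem zpow_sub_mul_div_eq_div_of_mul_zpow_eq {α : Type*} [CommGroup α] {a u b b' w w' : α}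
    {c c' : ℤ} (h : a * u ^ c = w * b⁻¹) (h' : a * u ^ c' = w' * b'⁻¹) :
    u ^ (c - c') * (b / b') = w / w' :=
  calc u ^ (c - c') * (b / b') = (a * u ^ c) / (a * u ^ c') * (b / b') := by
        rw [mul_div_mul_left_eq_div, zpow_sub, div_eq_mul_inv (u ^ c)]
    _ = w / w' := by rw [h, h', div_mul_div_comm, div_eq_div_iff_mul_eq_mul]; group

theorem payout_transcript_quotient_general
    {G G₂ GT : Type*} [CommGroup G] [CommGroup G₂] [CommGroup GT]
    (e : G → G₂ → GT)
    (e_left : ∀ x y z, e (x * y) z = e x z * e y z)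
    (h : G) (g₂ : G₂) {k : ℕ} (𝔊 : Fin k → G) (pk : GT)
    (E : GT) (s : G₂) (c c' : ℤ) (Y Y' : Fin k → ℤ) (z z' : G)
    (hacc : E * pk ^ c * (e h s) ^ c = e z g₂ * (e (∏ i, 𝔊 i ^ Y i) s)⁻¹)
    (hacc' : E * pk ^ c' * (e h s) ^ c' = e z' g₂ * (e (∏ i, 𝔊 i ^ Y' i) s)⁻¹) :
    pk ^ (c - c') * (e h s) ^ (c - c') * e (∏ i, 𝔊 i ^ (Y i - Y' i)) s
      = e (z * z'⁻¹) g₂ := by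
  let eS : G →* GT := MonoidHom.mk' (e · s) (e_left · · s)
  let eG : G →* GT := MonoidHom.mk' (e · g₂) (e_left · · g₂)
  have hY : e (∏ i, 𝔊 i ^ (Y i - Y' i)) s
      = e (∏ i, 𝔊 i ^ Y i) s / e (∏ i, 𝔊 i ^ Y' i) s := by
    rw [Finset.prod_zpow_sub]
    exact map_div eS _ _
  have hz : e (z * z'⁻¹) g₂ = e z g₂ / e z' g₂ := by
    rw [← div_eq_mul_inv]
    exact map_div eG z z'
  rw [← mul_zpow, hY, hz]
  rw [mul_assoc, ← mul_zpow] at hacc hacc'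
  exact zpow_sub_mul_div_eq_div_of_mul_zpow_eq hacc hacc'

/-- Transcript-quotient identity for the payout coin argument. -/
theorem payout_transcript_quotient
    {G G₂ GT : Type*} [CommGroup G] [CommGroup G₂] [CommGroup GT]
    (e : G → G₂ → GT)
    (e_left : ∀ x y z, e (x * y) z = e x z * e y z)
    (e_right : ∀ x z w, e x (z * w) = e x z * e x w)
    (h : G) (g₂ : G₂) {k : ℕ} (𝔊 : Fin k → G) (pk : GT)
    (E : GT) (s : G₂) (c c' : ℤ) (Y Y' : Fin k → ℤ) (z z' : G)
    (hacc : E * pk ^ c * (e h s) ^ c = e z g₂ * (e (∏ i, 𝔊 i ^ Y i) s)⁻¹)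
    (hacc' : E * pk ^ c' * (e h s) ^ c' = e z' g₂ * (e (∏ i, 𝔊 i ^ Y' i) s)⁻¹) :
    pk ^ (c - c') * (e h s) ^ (c - c') * e (∏ i, 𝔊 i ^ (Y i - Y' i)) s
      = e (z * z'⁻¹) g₂ :=
  payout_transcript_quotient_general e e_left h g₂ 𝔊 pk E s c c' Y Y' z z' hacc hacc'
end

section
/- Honest-verifier zero-knowledge of the Σ-protocol for correct VRF evaluation: for every challenge c ∈ ZMod q, the pushforward of uniform(ZMod q) under the honest prover map b ↦ (T^{b.val}, b + c·sk) equals the pushforward of uniform(ZMod q) under the simulator map z ↦ (T^{(z + c·x).val} · g_T^{−(c.val)}, z). In particular, simulated transcripts, computed without knowledge of the secret key sk, are distributed identically to honest transcripts. -/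
/-! Translating the prover's randomness by `c * sk` is a bijection of `ZMod q`, so it preserves the
uniform distribution; after this change of variables the honest and simulated commitments agree
pointwise, because `g_T = T ^ (sk + x)` and exponents of `T` only matter modulo `q`. -/

theorem PMF.map_uniformOfFintype_equiv {α : Type*} [Fintype α] [Nonempty α] (e : α ≃ α) :
    (PMF.uniformOfFintype α).map e = PMF.uniformOfFintype α := by
  ext b
  rw [PMF.map_apply, tsum_eq_single (e.symm b) fun a ha => if_neg fun h => ha (by simp [h])]
  simp [PMF.uniformOfFintype_apply]

theorem zpow_eq_zpow_of_intCast_eq {G : Type*} [Group G] {q : ℕ} {g : G} (hg : g ^ q = 1)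
    {m n : ℤ} (h : (m : ZMod q) = n) : g ^ m = g ^ n :=
  zpow_eq_zpow_iff_modEq.mpr <|
    ((ZMod.intCast_eq_intCast_iff m n q).mp h).of_dvd
      (Int.natCast_dvd_natCast.mpr (orderOf_dvd_of_pow_eq_one hg))

theorem pow_val_eq_pow_val_add_mul_mul_zpow_neg {G : Type*} [Group G] {q : ℕ} [NeZero q]
    {g : G} (hg : g ^ q = 1) (a c s : ZMod q) :
    g ^ a.val = g ^ (a + c * s).val * (g ^ s.val) ^ (-(c.val : ℤ)) := by
  rw [← zpow_natCast, ← zpow_natCast g (a + c * s).val, ← zpow_natCast g s.val, ← zpow_mul,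
    ← zpow_add]
  apply zpow_eq_zpow_of_intCast_eq hg
  push_cast [ZMod.natCast_val, ZMod.cast_id]
  ring

/-- Honest-verifier zero-knowledge of the Σ-protocol for correct VRF evaluation. -/
theorem vrf_sigma_hvzk
    {q : ℕ} [Fact q.Prime]
    {GT : Type*} [CommGroup GT] (hGT : ∀ y : GT, y ^ q = 1)
    (gT T : GT) (sk x : ZMod q)
    (hT : T ^ (sk + x).val = gT)
    (c : ZMod q) :
    (PMF.uniformOfFintype (ZMod q)).map
        (fun b => (T ^ b.val, b + c * sk))
      = (PMF.uniformOfFintype (ZMod q)).map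
        (fun z => (T ^ (z + c * x).val * gT ^ (-(c.val : ℤ)), z)) := by
  conv_rhs => rw [← PMF.map_uniformOfFintype_equiv (Equiv.addRight (c * sk)), PMF.map_comp]
  congr 1
  funext b
  simp only [Function.comp_apply, Equiv.coe_addRight, Prod.mk.injEq, and_true]
  rw [← hT, add_assoc, ← mul_add]
  exact pow_val_eq_pow_val_add_mul_mul_zpow_neg (hGT T) b c (sk + x)
end
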